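/- arXiv:0911.4365 — 2 statements merged into one kernel-verified Lean document; each statement's English description precedes it below -/
import Mathlib

section
/- Let A₁, A₂ : (0,∞) → (0,∞) be continuous, integrable in a neighborhood of zero but not integrable in a neighborhood of infinity, with A₁(t) ≥ A₂(t) for all t > 0. Then for every t ≥ 0 one has |Φ_{A₁}'(t)| · Φ_{A₂}(t) ≥ |Φ_{A₂}'(t)| · Φ_{A₁}(t). -/
open MeasureTheory Filter Set

/-- Hypotheses on the coefficient `A` of the Sturm–Liouville equation: continuous and
strictly positive on `(0,∞)`, integrable in a neighborhood of zero, but not integrable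
in a neighborhood of infinity. -/
def SLHyp (A : ℝ → ℝ) : Prop :=
  ContinuousOn A (Set.Ioi 0) ∧ (∀ t > (0:ℝ), 0 < A t) ∧
  MeasureTheory.IntegrableOn A (Set.Ioc 0 1) ∧
  (∫⁻ t in Set.Ici (1:ℝ), ENNReal.ofReal (A t)) = ⊤

/-- `Φ` is a bounded continuous function on `[0,∞)` with `Φ 0 = 1`, twice differentiable on
`(0,∞)` and satisfying the Sturm–Liouville equation `Φ'' = A Φ` there. -/
def IsSL (A Φ : ℝ → ℝ) : Prop :=
  ContinuousOn Φ (Set.Ici 0) ∧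
  (∃ M : ℝ, ∀ t ≥ (0:ℝ), |Φ t| ≤ M) ∧
  Φ 0 = 1 ∧
  (∀ t > (0:ℝ), DifferentiableAt ℝ Φ t) ∧
  (∀ t > (0:ℝ), HasDerivAt (deriv Φ) (A t * Φ t) t)

/-!
The Wronskian `W = Φ₁' Φ₂ - Φ₂' Φ₁` satisfies `W' = (A₁ - A₂) Φ₁ Φ₂ ≥ 0`, and `W → 0` at
infinity because a bounded function with monotone derivative on a half-line has derivative `≤ 0`
and tending to `0`. Hence `W ≤ 0`, which is the claim since `Φᵢ > 0` and `Φᵢ' ≤ 0`; at `t = 0`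
one passes to the limit, `Φ'(0⁺)` being finite because `Φ'(t) = Φ'(1) - ∫ₜ¹ A Φ` with `A`
integrable near `0`. Positivity of `Φ`: `Φ²` is bounded with monotone derivative, hence
nonincreasing, so a zero of `Φ` persists forever, and uniqueness for `Φ'' = A Φ` then forces
`Φ ≡ 0` near `0`.
-/

open Topology

section MonotoneDeriv

variable {f g : ℝ → ℝ} {a : ℝ}

theorem monotoneOn_Ioi_of_hasDerivAt_nonneg (hf : ∀ t > a, HasDerivAt f (g t) t)
    (hg : ∀ t > a, 0 ≤ g t) : MonotoneOn f (Ioi a) :=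
  monotoneOn_of_hasDerivWithinAt_nonneg (convex_Ioi a)
    (fun t ht => (hf t ht).continuousAt.continuousWithinAt)
    (fun t ht => by rw [interior_Ioi] at ht ⊢; exact (hf t ht).hasDerivWithinAt)
    (fun t ht => hg t (interior_subset ht))

theorem image_sub_mem_Icc_of_monotoneOn_hasDerivAt (hf : ∀ t > a, HasDerivAt f (g t) t)
    (hg : MonotoneOn g (Ioi a)) {s t : ℝ} (hs : a < s) (hst : s ≤ t) :
    f t - f s ∈ Icc (g s * (t - s)) (g t * (t - s)) := by
  have hsub : Icc s t ⊆ Ioi a := fun x hx => hs.trans_le hx.1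
  have hcont : ContinuousOn f (Icc s t) :=
    fun x hx => (hf x (hsub hx)).continuousAt.continuousWithinAt
  have hdiff : DifferentiableOn ℝ f (interior (Icc s t)) :=
    fun x hx => (hf x (hsub (interior_subset hx))).differentiableAt.differentiableWithinAt
  have hderiv : ∀ x ∈ interior (Icc s t), g s ≤ deriv f x ∧ deriv f x ≤ g t := fun x hx => by
    rw [interior_Icc] at hx
    rw [(hf x (hs.trans hx.1)).deriv]
    exact ⟨hg hs (hs.trans hx.1) hx.1.le, hg (hs.trans hx.1) (hs.trans_le hst) hx.2.le⟩
  exact ⟨(convex_Icc s t).mul_sub_le_image_sub_of_le_deriv hcont hdiff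
      (fun x hx => (hderiv x hx).1) s (left_mem_Icc.2 hst) t (right_mem_Icc.2 hst) hst,
    (convex_Icc s t).image_sub_le_mul_sub_of_deriv_le hcont hdiff
      (fun x hx => (hderiv x hx).2) s (left_mem_Icc.2 hst) t (right_mem_Icc.2 hst) hst⟩

theorem nonpos_of_monotoneOn_hasDerivAt_of_le (hf : ∀ t > a, HasDerivAt f (g t) t)
    (hg : MonotoneOn g (Ioi a)) {M : ℝ} (hM : ∀ t > a, f t ≤ M) : ∀ t > a, g t ≤ 0 := by
  intro t ht
  by_contra! hpos
  have hstep : 0 ≤ (M - f t + 1) / g t := div_nonneg (by linarith [hM t ht]) hpos.le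
  have hgrowth := (image_sub_mem_Icc_of_monotoneOn_hasDerivAt hf hg ht
    (le_add_of_nonneg_right hstep)).1
  rw [add_sub_cancel_left, mul_div_cancel₀ _ hpos.ne'] at hgrowth
  linarith [hM _ (ht.trans_le (le_add_of_nonneg_right hstep))]

theorem tendsto_zero_of_monotoneOn_hasDerivAt_of_abs_le (hf : ∀ t > a, HasDerivAt f (g t) t)
    (hg : MonotoneOn g (Ioi a)) {M : ℝ} (hM : ∀ t > a, |f t| ≤ M) :
    Tendsto g atTop (𝓝 0) := by
  have hnonpos := nonpos_of_monotoneOn_hasDerivAt_of_le hf hg fun t ht =>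
    (le_abs_self _).trans (hM t ht)
  -- `g t` dominates the slope of `f` over `[a + 1, t]`, which is at least `-2M / (t - (a + 1))`.
  have hlower : Tendsto (fun t => -(2 * M) / (t - (a + 1))) atTop (𝓝 0) :=
    tendsto_const_nhds.div_atTop (tendsto_atTop_add_const_right _ _ tendsto_id)
  refine tendsto_of_tendsto_of_tendsto_of_le_of_le' hlower tendsto_const_nhds ?_ ?_
  · filter_upwards [eventually_gt_atTop (a + 1)] with t ht
    rw [div_le_iff₀ (sub_pos.2 ht)]
    have := (image_sub_mem_Icc_of_monotoneOn_hasDerivAt hf hg (lt_add_one a) ht.le).2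
    linarith [neg_abs_le (f t), le_abs_self (f (a + 1)), hM t (by linarith),
      hM (a + 1) (lt_add_one a)]
  · filter_upwards [eventually_gt_atTop a] with t ht using hnonpos t ht

end MonotoneDeriv

theorem tendsto_nhdsGT_of_hasDerivAt_of_integrableOn {f f' : ℝ → ℝ} {a b : ℝ} (hab : a < b)
    (hf : ∀ t ∈ Ioc a b, HasDerivAt f (f' t) t) (hint : IntegrableOn f' (Ioc a b)) :
    Tendsto f (𝓝[>] a) (𝓝 (f b - ∫ t in a..b, f' t)) := by
  have hprim : ContinuousWithinAt (fun x => ∫ t in x..b, f' t) (Icc a b) a := by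
    have hint' : IntegrableOn f' (uIcc a b) := by
      rwa [uIcc_of_le hab.le, integrableOn_Icc_iff_integrableOn_Ioc]
    simpa only [uIcc_of_le hab.le] using
      intervalIntegral.continuousOn_primitive_interval_left hint' a left_mem_uIcc
  have hftc : ∀ x ∈ Ioc a b, f b - ∫ t in x..b, f' t = f x := fun x hx => by
    have hsub : uIcc x b ⊆ Ioc a b := by
      rw [uIcc_of_le hx.2]
      exact fun t ht => ⟨hx.1.trans_le ht.1, ht.2⟩
    rw [intervalIntegral.integral_eq_sub_of_hasDerivAt (fun t ht => hf t (hsub ht))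
      ((intervalIntegrable_iff_integrableOn_Ioc_of_le hx.2).2
        (hint.mono_set (Ioc_subset_Ioc_left hx.1.le)))]
    ring
  rw [← nhdsWithin_Ioc_eq_nhdsGT hab]
  exact (tendsto_const_nhds.sub (hprim.mono Ioc_subset_Icc_self)).congr'
    (eventually_nhdsWithin_of_forall hftc)

theorem eqOn_zero_of_hasDerivAt_deriv {A u : ℝ → ℝ} {a b t₀ : ℝ}
    (hA : ContinuousOn A (Icc a b)) (hu : ∀ t ∈ Icc a b, DifferentiableAt ℝ u t)
    (hu' : ∀ t ∈ Icc a b, HasDerivAt (deriv u) (A t * u t) t) (ht₀ : t₀ ∈ Ioo a b)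
    (h₀ : u t₀ = 0) (h₀' : deriv u t₀ = 0) : EqOn u 0 (Icc a b) := by
  obtain ⟨C, hC⟩ := isCompact_Icc.exists_bound_of_continuousOn hA
  have hlip : ∀ t ∈ Ioo a b, LipschitzOnWith (max 1 C.toNNReal)
      (fun p : ℝ × ℝ => (p.2, A t * p.1)) univ := fun t ht => by
    refine (LipschitzWith.prod_snd.prodMk
      ((lipschitzWith_smul (A t)).comp LipschitzWith.prod_fst)
      |>.weaken (max_le_max le_rfl ?_)).lipschitzOnWith
    rw [mul_one, ← NNReal.coe_le_coe, coe_nnnorm]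
    exact (hC t (Ioo_subset_Icc_self ht)).trans (Real.le_coe_toNNReal C)
  have hsol := ODE_solution_unique_of_mem_Icc (s := fun _ => univ) hlip ht₀
    (f := fun t => (u t, deriv u t)) (g := 0)
    (fun t ht => ((hu t ht).continuousAt.prodMk (hu' t ht).continuousAt).continuousWithinAt)
    (fun t ht => (hu t (Ioo_subset_Icc_self ht)).hasDerivAt.prodMk
      (hu' t (Ioo_subset_Icc_self ht)))
    (fun _ _ => mem_univ _) continuousOn_const
    (fun t _ => (hasDerivAt_const t (0 : ℝ × ℝ)).congr_deriv (by simp [Prod.zero_eq_mk]))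
    (fun _ _ => mem_univ _) (by simp [h₀, h₀'])
  exact fun t ht => congrArg Prod.fst (hsol ht)

namespace IsSL

variable {A Φ : ℝ → ℝ}

theorem hasDerivAt (h : IsSL A Φ) {t : ℝ} (ht : 0 < t) : HasDerivAt Φ (deriv Φ t) t :=
  (h.2.2.2.1 t ht).hasDerivAt

theorem isBoundedUnder_norm (h : IsSL A Φ) : IsBoundedUnder (· ≤ ·) atTop ((‖·‖) ∘ Φ) := by
  obtain ⟨M, hM⟩ := h.2.1
  exact isBoundedUnder_of_eventually_le ((eventually_ge_atTop 0).mono hM)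

theorem tendsto_nhdsGT_zero (h : IsSL A Φ) : Tendsto Φ (𝓝[>] 0) (𝓝 1) := by
  have := (h.1 0 self_mem_Ici).mono Ioi_subset_Ici_self
  rwa [ContinuousWithinAt, h.2.2.1] at this

theorem antitoneOn_sq (hA : SLHyp A) (h : IsSL A Φ) :
    AntitoneOn (fun t => Φ t ^ 2) (Ici 0) := by
  obtain ⟨hcont, ⟨M, hM⟩, -, hdiff, hode⟩ := h
  have hsq : ∀ t > (0 : ℝ), HasDerivAt (fun t => Φ t ^ 2) (2 * Φ t * deriv Φ t) t :=
    fun t ht => ((hdiff t ht).hasDerivAt.fun_pow 2).congr_deriv (by ring)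
  have hsq' : ∀ t > (0 : ℝ), HasDerivAt (fun t => 2 * Φ t * deriv Φ t)
      (2 * (deriv Φ t ^ 2 + A t * Φ t ^ 2)) t := fun t ht =>
    (((hdiff t ht).hasDerivAt.const_mul 2).mul (hode t ht)).congr_deriv (by ring)
  have hconvex : MonotoneOn (fun t => 2 * Φ t * deriv Φ t) (Ioi 0) :=
    monotoneOn_Ioi_of_hasDerivAt_nonneg hsq' fun t ht => by
      have := hA.2.1 t ht
      positivity
  have hnonpos := nonpos_of_monotoneOn_hasDerivAt_of_le hsq hconvex (M := M ^ 2) fun t ht =>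
    sq_abs (Φ t) ▸ pow_le_pow_left₀ (abs_nonneg _) (hM t ht.le) 2
  refine antitoneOn_of_hasDerivWithinAt_nonpos (convex_Ici 0) (hcont.pow 2)
    (f' := fun t => 2 * Φ t * deriv Φ t) (fun t ht => ?_) (fun t ht => ?_)
  · rw [interior_Ici] at ht ⊢
    exact (hsq t ht).hasDerivWithinAt
  · rw [interior_Ici] at ht
    exact hnonpos t ht

theorem pos (hA : SLHyp A) (h : IsSL A Φ) : ∀ t ≥ 0, 0 < Φ t := by
  have hanti := h.antitoneOn_sq hA
  have hlim₁ := h.tendsto_nhdsGT_zero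
  obtain ⟨hcont, -, hΦ0, hdiff, hode⟩ := h
  by_contra! ⟨t₀, ht₀, hΦt₀⟩
  obtain ⟨T, hT, hΦT⟩ : ∃ T ∈ Icc 0 t₀, Φ T = 0 :=
    intermediate_value_Icc' ht₀ (hcont.mono Icc_subset_Ici_self) ⟨hΦt₀, hΦ0 ▸ zero_le_one⟩
  have hzero : ∀ s > T, Φ s = 0 := fun s hs => by
    have := hanti hT.1 (hT.1.trans hs.le) hs.le
    simp only [hΦT] at this
    exact pow_eq_zero_iff two_ne_zero |>.1 (le_antisymm (by simpa using this) (sq_nonneg _))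
  have hderiv : deriv Φ (T + 1) = 0 := by
    have : Φ =ᶠ[𝓝 (T + 1)] fun _ => 0 := eventually_gt_nhds (lt_add_one T) |>.mono hzero
    rw [this.deriv_eq, deriv_const]
  have hnear0 : ∀ ε ∈ Ioo 0 (T + 1), Φ ε = 0 := fun ε hε => by
    have hsub : Icc ε (T + 2) ⊆ Ioi 0 := fun t ht => hε.1.trans_le ht.1
    exact eqOn_zero_of_hasDerivAt_deriv (hA.1.mono hsub) (fun t ht => hdiff t (hsub ht))
      (fun t ht => hode t (hsub ht)) ⟨hε.2, by linarith⟩ (hzero _ (lt_add_one T)) hderiv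
      (left_mem_Icc.2 (by linarith [hε.2]))
  have : Tendsto Φ (𝓝[>] 0) (𝓝 0) := tendsto_const_nhds.congr'
    (eventually_of_mem (Ioo_mem_nhdsGT (by linarith [hT.1])) fun ε hε => (hnear0 ε hε).symm)
  exact one_ne_zero (tendsto_nhds_unique hlim₁ this)

theorem monotoneOn_deriv (hA : SLHyp A) (h : IsSL A Φ) : MonotoneOn (deriv Φ) (Ioi 0) :=
  monotoneOn_Ioi_of_hasDerivAt_nonneg h.2.2.2.2 fun t ht =>
    mul_nonneg (hA.2.1 t ht).le (h.pos hA t ht.le).le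

theorem deriv_nonpos (hA : SLHyp A) (h : IsSL A Φ) : ∀ t > 0, deriv Φ t ≤ 0 := by
  obtain ⟨M, hM⟩ := h.2.1
  exact nonpos_of_monotoneOn_hasDerivAt_of_le (fun t ht => h.hasDerivAt ht)
    (h.monotoneOn_deriv hA) fun t ht => (le_abs_self _).trans (hM t ht.le)

theorem tendsto_deriv_atTop (hA : SLHyp A) (h : IsSL A Φ) :
    Tendsto (deriv Φ) atTop (𝓝 0) := by
  obtain ⟨M, hM⟩ := h.2.1
  exact tendsto_zero_of_monotoneOn_hasDerivAt_of_abs_le (fun t ht => h.hasDerivAt ht)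
    (h.monotoneOn_deriv hA) fun t ht => hM t ht.le

theorem exists_tendsto_deriv_nhdsGT_zero (hA : SLHyp A) (h : IsSL A Φ) :
    ∃ ℓ, Tendsto (deriv Φ) (𝓝[>] 0) (𝓝 ℓ) ∧ HasDerivWithinAt Φ ℓ (Ici 0) 0 := by
  obtain ⟨hcont, ⟨M, hM⟩, -, hdiff, hode⟩ := h
  have hint : IntegrableOn (fun t => A t * Φ t) (Ioc 0 1) :=
    hA.2.2.1.mul_bdd ((hcont.mono fun t ht => ht.1.le).aestronglyMeasurable measurableSet_Ioc)
      (ae_restrict_of_forall_mem measurableSet_Ioc fun t ht => hM t ht.1.le)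
  have hlim :=
    tendsto_nhdsGT_of_hasDerivAt_of_integrableOn one_pos (fun t ht => hode t ht.1) hint
  exact ⟨_, hlim, hasDerivWithinAt_Ici_of_tendsto_deriv
    (fun t ht => (hdiff t ht).differentiableWithinAt)
    ((hcont 0 self_mem_Ici).mono Ioi_subset_Ici_self) self_mem_nhdsWithin hlim⟩

end IsSL

noncomputable def wronskian (f g : ℝ → ℝ) (t : ℝ) : ℝ := deriv f t * g t - deriv g t * f t

theorem wronskian_nonpos {A₁ A₂ Φ₁ Φ₂ : ℝ → ℝ} (hA₁ : SLHyp A₁) (hA₂ : SLHyp A₂)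
    (hle : ∀ t > 0, A₂ t ≤ A₁ t) (h₁ : IsSL A₁ Φ₁) (h₂ : IsSL A₂ Φ₂) :
    ∀ t > 0, wronskian Φ₁ Φ₂ t ≤ 0 := by
  have hW : ∀ t > 0, HasDerivAt (wronskian Φ₁ Φ₂) ((A₁ t - A₂ t) * Φ₁ t * Φ₂ t) t :=
    fun t ht => ((h₁.2.2.2.2 t ht).mul (h₂.hasDerivAt ht)).sub
      ((h₂.2.2.2.2 t ht).mul (h₁.hasDerivAt ht)) |>.congr_deriv (by ring)
  have hmono := monotoneOn_Ioi_of_hasDerivAt_nonneg hW fun t ht =>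
    mul_nonneg (mul_nonneg (sub_nonneg.2 (hle t ht)) (h₁.pos hA₁ t ht.le).le)
      (h₂.pos hA₂ t ht.le).le
  have hlim : Tendsto (wronskian Φ₁ Φ₂) atTop (𝓝 0) := by
    unfold wronskian
    simpa using
      ((h₁.tendsto_deriv_atTop hA₁).zero_mul_isBoundedUnder_le h₂.isBoundedUnder_norm).sub
        ((h₂.tendsto_deriv_atTop hA₂).zero_mul_isBoundedUnder_le h₁.isBoundedUnder_norm)
  exact fun t ht => ge_of_tendsto hlim <|
    (eventually_gt_atTop t).mono fun s hs => hmono ht (ht.trans hs) hs.le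

theorem log_derivative_monotone_in_coefficient
    (A₁ A₂ Φ₁ Φ₂ : ℝ → ℝ) (hA₁ : SLHyp A₁) (hA₂ : SLHyp A₂)
    (hle : ∀ t > (0:ℝ), A₂ t ≤ A₁ t)
    (h1 : IsSL A₁ Φ₁) (h2 : IsSL A₂ Φ₂) :
    ∀ t ≥ (0:ℝ),
      |derivWithin Φ₂ (Set.Ici 0) t| * Φ₁ t ≤ |derivWithin Φ₁ (Set.Ici 0) t| * Φ₂ t := by
  have hW := wronskian_nonpos hA₁ hA₂ hle h1 h2
  unfold wronskian at hW
  intro t ht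
  rcases ht.eq_or_lt with rfl | ht
  · obtain ⟨ℓ₁, hlim₁, hderiv₁⟩ := h1.exists_tendsto_deriv_nhdsGT_zero hA₁
    obtain ⟨ℓ₂, hlim₂, hderiv₂⟩ := h2.exists_tendsto_deriv_nhdsGT_zero hA₂
    have hℓ₁ : ℓ₁ ≤ 0 :=
      le_of_tendsto hlim₁ (eventually_nhdsWithin_of_forall (h1.deriv_nonpos hA₁))
    have hℓ₂ : ℓ₂ ≤ 0 :=
      le_of_tendsto hlim₂ (eventually_nhdsWithin_of_forall (h2.deriv_nonpos hA₂))
    have hℓ : ℓ₁ * 1 - ℓ₂ * 1 ≤ 0 :=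
      le_of_tendsto ((hlim₁.mul h2.tendsto_nhdsGT_zero).sub (hlim₂.mul h1.tendsto_nhdsGT_zero))
        (eventually_nhdsWithin_of_forall hW)
    rw [hderiv₁.derivWithin (uniqueDiffOn_Ici 0 0 self_mem_Ici),
      hderiv₂.derivWithin (uniqueDiffOn_Ici 0 0 self_mem_Ici), h1.2.2.1, h2.2.2.1,
      abs_of_nonpos hℓ₁, abs_of_nonpos hℓ₂]
    linarith
  · rw [derivWithin_of_mem_nhds (Ici_mem_nhds ht), derivWithin_of_mem_nhds (Ici_mem_nhds ht),
      abs_of_nonpos (h1.deriv_nonpos hA₁ t ht), abs_of_nonpos (h2.deriv_nonpos hA₂ t ht)]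
    linarith [hW t ht]
end

section
/- In the setting of the family (A_λ), Φ_{A_λ}(t) converges to 1 as (λ, t) → (0, 0); i.e., for every ε > 0 there exist λ₁ > 0 and t₁ > 0 such that for all λ ∈ (0, λ₁] and t ∈ [0, t₁], one has |Φ_{A_λ}(t) − 1| ≤ ε. -/
open MeasureTheory Filter Set

/-! Since `(Φ Φ')' = Φ'² + A Φ² ≥ 0`, the product `Φ Φ'` is nondecreasing; were it positive
somewhere, `Φ²` would grow at least linearly, against boundedness. Hence `Φ²` is nonincreasing
and `|Φ| ≤ Φ 0 = 1`, so `|Φ''| ≤ A ≤ g` for any majorant `g` of `A` with primitive `G`, and `Φ'`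
varies by at most `G 2` on `(0, 2]`. As `Φ'(η) = Φ 2 - Φ 1 ∈ [-2, 2]` for some `η ∈ (1, 2)`,
this gives `|Φ'| ≤ 2 + G 2` on `(0, 1]`, hence `|Φ t - 1| ≤ (2 + G 2) t`. For `A_λ` with `λ ≤ 1`
the majorant `g u = C u^β + C` does not depend on `λ`. -/

namespace IsSL

variable {A Φ : ℝ → ℝ}

theorem hasDerivAt_sq (h : IsSL A Φ) {t : ℝ} (ht : 0 < t) :
    HasDerivAt (fun s => Φ s ^ 2) (2 * (Φ t * deriv Φ t)) t :=
  ((h.2.2.2.1 t ht).hasDerivAt.fun_pow 2).congr_deriv (by ring)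

theorem monotoneOn_mul_deriv (h : IsSL A Φ) (hA : ∀ t > (0:ℝ), 0 ≤ A t) :
    MonotoneOn (fun t => Φ t * deriv Φ t) (Ioi 0) := by
  have hderiv : ∀ t ∈ Ioi (0:ℝ), HasDerivAt (fun t => Φ t * deriv Φ t)
      (deriv Φ t * deriv Φ t + Φ t * (A t * Φ t)) t := fun t ht =>
    (h.2.2.2.1 t ht).hasDerivAt.mul (h.2.2.2.2 t ht)
  refine monotoneOn_of_hasDerivWithinAt_nonneg (convex_Ioi 0)
    (fun t ht => (hderiv t ht).continuousAt.continuousWithinAt)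
    (fun t ht => (hderiv t (interior_subset ht)).hasDerivWithinAt) fun t ht => ?_
  have := hA t (interior_subset ht)
  nlinarith [mul_nonneg this (sq_nonneg (Φ t)), sq_nonneg (deriv Φ t)]

theorem mul_deriv_nonpos (h : IsSL A Φ) (hA : ∀ t > (0:ℝ), 0 ≤ A t) {t : ℝ} (ht : 0 < t) :
    Φ t * deriv Φ t ≤ 0 := by
  by_contra! hδ
  set δ := Φ t * deriv Φ t
  obtain ⟨M, hM⟩ := h.2.1
  have hgrowth : ∀ y ≥ t, 2 * δ * (y - t) ≤ Φ y ^ 2 - Φ t ^ 2 := by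
    refine fun y hy => (convex_Ici t).mul_sub_le_image_sub_of_le_deriv
      (fun s hs => (h.hasDerivAt_sq (ht.trans_le hs)).continuousAt.continuousWithinAt)
      (fun s hs => (h.hasDerivAt_sq (ht.trans_le (interior_subset hs))).differentiableAt
        |>.differentiableWithinAt) (fun s hs => ?_) t self_mem_Ici y hy hy
    have hs : t ≤ s := interior_subset hs
    rw [(h.hasDerivAt_sq (ht.trans_le hs)).deriv]
    exact mul_le_mul_of_nonneg_left (h.monotoneOn_mul_deriv hA ht (ht.trans_le hs) hs) two_pos.le
  set y := t + (M ^ 2 + 1) / (2 * δ)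
  have hy : 2 * δ * (y - t) = M ^ 2 + 1 := by
    simp only [y, add_sub_cancel_left]
    field_simp
  have hΦy : Φ y ^ 2 ≤ M ^ 2 := by
    simpa only [sq_abs] using pow_le_pow_left₀ (abs_nonneg _) (hM y (by positivity)) 2
  nlinarith [hgrowth y (le_add_of_nonneg_right (by positivity)), sq_nonneg (Φ t)]

theorem abs_le_one (h : IsSL A Φ) (hA : ∀ t > (0:ℝ), 0 ≤ A t) {t : ℝ} (ht : 0 ≤ t) :
    |Φ t| ≤ 1 := by
  have hanti : AntitoneOn (fun s => Φ s ^ 2) (Ici 0) := by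
    refine antitoneOn_of_hasDerivWithinAt_nonpos (convex_Ici 0) (h.1.pow 2)
      (fun s hs => (h.hasDerivAt_sq ?_).hasDerivWithinAt) fun s hs => ?_
    all_goals rw [interior_Ici] at hs
    · exact hs
    · linarith [h.mul_deriv_nonpos hA hs]
  have := hanti self_mem_Ici ht ht
  simp only [h.2.2.1, one_pow] at this
  exact (sq_le_one_iff_abs_le_one _).mp this

theorem abs_deriv_sub_le (h : IsSL A Φ) (hA : ∀ t > (0:ℝ), 0 ≤ A t) {G g : ℝ → ℝ}
    (hG : ∀ t > (0:ℝ), HasDerivAt G (g t) t) (hAg : ∀ t > (0:ℝ), A t ≤ g t)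
    {s r : ℝ} (hs : 0 < s) (hsr : s ≤ r) :
    |deriv Φ r - deriv Φ s| ≤ G r - G s := by
  have key := image_norm_le_of_norm_deriv_right_le_deriv_boundary'
    (f := fun u => deriv Φ u - deriv Φ s) (f' := fun u => A u * Φ u) (B := fun u => G u - G s)
    (a := s) (b := r) (B' := g) ?_ (fun u hu => ((h.2.2.2.2 u (hs.trans_le hu.1)).sub_const _)
      |>.hasDerivWithinAt) (by simp) ?_
    (fun u hu => ((hG u (hs.trans_le hu.1)).sub_const _).hasDerivWithinAt) ?_ ⟨hsr, le_rfl⟩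
  · simpa using key
  · exact fun u hu => ((h.2.2.2.2 u (hs.trans_le hu.1)).continuousAt.sub
      continuousAt_const).continuousWithinAt
  · exact fun u hu => ((hG u (hs.trans_le hu.1)).continuousAt.sub
      continuousAt_const).continuousWithinAt
  · intro u hu
    have hu0 := hs.trans_le hu.1
    rw [Real.norm_eq_abs, abs_mul, abs_of_nonneg (hA u hu0)]
    calc A u * |Φ u| ≤ A u * 1 := mul_le_mul_of_nonneg_left (h.abs_le_one hA hu0.le) (hA u hu0)
      _ ≤ g u := by simpa using hAg u hu0

theorem abs_sub_one_le (h : IsSL A Φ) (hA : ∀ t > (0:ℝ), 0 ≤ A t) {G g : ℝ → ℝ}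
    (hG : ∀ t > (0:ℝ), HasDerivAt G (g t) t) (hAg : ∀ t > (0:ℝ), A t ≤ g t)
    (hG0 : ∀ t > (0:ℝ), 0 ≤ G t) {t : ℝ} (ht0 : 0 ≤ t) (ht1 : t ≤ 1) :
    |Φ t - 1| ≤ (2 + G 2) * t := by
  rcases ht0.eq_or_lt with rfl | ht
  · simp [h.2.2.1]
  obtain ⟨η, hη, hηslope⟩ := exists_deriv_eq_slope Φ one_lt_two
    (h.1.mono fun u hu => zero_le_one.trans hu.1)
    fun u hu => (h.2.2.2.1 u (one_pos.trans hu.1)).differentiableWithinAt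
  obtain ⟨ξ, hξ, hξslope⟩ := exists_deriv_eq_slope Φ ht
    (h.1.mono fun u hu => hu.1) fun u hu => (h.2.2.2.1 u hu.1).differentiableWithinAt
  have hη_bound : |deriv Φ η| ≤ 2 := by
    rw [hηslope, show (2:ℝ) - 1 = 1 by norm_num, div_one]
    linarith [abs_sub (Φ 2) (Φ 1), h.abs_le_one hA zero_le_two, h.abs_le_one hA zero_le_one]
  have hξη := h.abs_deriv_sub_le hA hG hAg hξ.1 (by linarith [hξ.2, hη.1] : ξ ≤ η)
  have hη2 := h.abs_deriv_sub_le hA hG hAg (by linarith [hη.1] : 0 < η) hη.2.le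
  have hξ_bound : |deriv Φ ξ| ≤ 2 + G 2 := by
    have := abs_sub_abs_le_abs_sub (deriv Φ ξ) (deriv Φ η)
    rw [abs_sub_comm] at this
    linarith [abs_nonneg (deriv Φ 2 - deriv Φ η), hG0 ξ hξ.1]
  rw [hξslope, h.2.2.1, sub_zero, abs_div, abs_of_pos ht, div_le_iff₀ ht] at hξ_bound
  exact hξ_bound

end IsSL

theorem rpow_mul_le_const_mul_rpow_add_const {β C μ : ℝ} {p : ℝ → ℝ} (hC : 0 ≤ C) (hμ : 1 ≤ μ)
    (hpbd₁ : β ≤ 0 → ∀ u > (0:ℝ), p u ≤ C)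
    (hpbd₂ : 0 < β → ∀ u > (0:ℝ), p u ≤ C * (1 + u ^ (-β))) {u : ℝ} (hu : 0 < u) :
    u ^ β * p (u * μ) ≤ C * u ^ β + C := by
  have huμ : 0 < u * μ := mul_pos hu (zero_lt_one.trans_le hμ)
  have hub : 0 ≤ u ^ β := Real.rpow_nonneg hu.le β
  rcases le_or_gt β 0 with hβ | hβ
  · nlinarith [hpbd₁ hβ _ huμ]
  · have hμβ : μ ^ (-β) ≤ 1 := Real.rpow_le_one_of_one_le_of_nonpos hμ (by linarith)
    calc u ^ β * p (u * μ) ≤ u ^ β * (C * (1 + (u * μ) ^ (-β))) := by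
          gcongr; exact hpbd₂ hβ _ huμ
      _ = C * u ^ β + C * μ ^ (-β) := by
          rw [Real.mul_rpow hu.le (by linarith), Real.rpow_neg hu.le, Real.rpow_neg (by linarith)]
          field_simp
      _ ≤ C * u ^ β + C := by gcongr; exact mul_le_of_le_one_right hC hμβ

theorem hasDerivAt_primitive_rpow {β C u : ℝ} (hβ : β + 1 ≠ 0) (hu : 0 < u) :
    HasDerivAt (fun u => C * (u ^ (β + 1) / (β + 1)) + C * u) (C * u ^ β + C) u := by
  refine ((((Real.hasDerivAt_rpow_const (p := β + 1) (Or.inl hu.ne')).div_const (β + 1)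
    ).const_mul C).fun_add ((hasDerivAt_id' u).const_mul C)).congr_deriv ?_
  field_simp
  simp

theorem phi_lambda_tendsto_one_at_origin_general
    (β C : ℝ) (hβ : -1 < β) (hC : 0 < C)
    (p : ℝ → ℝ) (hppos : ∀ u > (0:ℝ), 0 < p u)
    (hpbd₁ : β ≤ 0 → ∀ u > (0:ℝ), p u ≤ C)
    (hpbd₂ : 0 < β → ∀ u > (0:ℝ), p u ≤ C * (1 + u ^ (-β))) :
    ∀ ε > (0:ℝ), ∃ lam₁ > (0:ℝ), ∃ t₁ > (0:ℝ),
      ∀ lam : ℝ, 0 < lam → lam ≤ lam₁ → ∀ t : ℝ, 0 ≤ t → t ≤ t₁ →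
        ∀ Φ : ℝ → ℝ, IsSL (fun u => u ^ β * p (u * lam ^ (-(1 / (β + 2))))) Φ →
          |Φ t - 1| ≤ ε := by
  intro ε hε
  set G : ℝ → ℝ := fun u => C * (u ^ (β + 1) / (β + 1)) + C * u
  have hβ1 : 0 < β + 1 := by linarith
  have hG0 : ∀ u > (0:ℝ), 0 ≤ G u := fun u hu => by simp only [G]; positivity
  have hK : 0 < 2 + G 2 := by linarith [hG0 2 two_pos]
  refine ⟨1, one_pos, min 1 (ε / (2 + G 2)), by positivity, ?_⟩
  intro lam hlam hlam1 t ht0 ht1 Φ hΦ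
  have hμ : 1 ≤ lam ^ (-(1 / (β + 2))) :=
    Real.one_le_rpow_of_pos_of_le_one_of_nonpos hlam hlam1
      (by rw [neg_nonpos]; exact one_div_nonneg.mpr (by linarith))
  have hA0 : ∀ u > (0:ℝ), 0 ≤ u ^ β * p (u * lam ^ (-(1 / (β + 2)))) := fun u hu =>
    mul_nonneg (Real.rpow_nonneg hu.le β) (hppos _ (mul_pos hu (by linarith))).le
  calc |Φ t - 1| ≤ (2 + G 2) * t :=
        hΦ.abs_sub_one_le hA0 (fun u hu => hasDerivAt_primitive_rpow hβ1.ne' hu)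
          (fun u hu => rpow_mul_le_const_mul_rpow_add_const hC.le hμ hpbd₁ hpbd₂ hu) hG0 ht0
          (ht1.trans (min_le_left _ _))
    _ ≤ (2 + G 2) * (ε / (2 + G 2)) := by gcongr; exact ht1.trans (min_le_right _ _)
    _ = ε := by field_simp

theorem phi_lambda_tendsto_one_at_origin
    (β c C : ℝ) (hβ : -1 < β) (hc : 0 < c) (hC : 0 < C)
    (p : ℝ → ℝ) (hpc : ContinuousOn p (Set.Ioi 0)) (hppos : ∀ u > (0:ℝ), 0 < p u)
    (hplim : Filter.Tendsto p Filter.atTop (nhds c))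
    (hpbd₁ : β ≤ 0 → ∀ u > (0:ℝ), p u ≤ C)
    (hpbd₂ : 0 < β → ∀ u > (0:ℝ), p u ≤ C * (1 + u ^ (-β))) :
    ∀ ε > (0:ℝ), ∃ lam₁ > (0:ℝ), ∃ t₁ > (0:ℝ),
      ∀ lam : ℝ, 0 < lam → lam ≤ lam₁ → ∀ t : ℝ, 0 ≤ t → t ≤ t₁ →
        ∀ Φ : ℝ → ℝ, IsSL (fun u => u ^ β * p (u * lam ^ (-(1 / (β + 2))))) Φ →
          |Φ t - 1| ≤ ε :=
  phi_lambda_tendsto_one_at_origin_general β C hβ hC p hppos hpbd₁ hpbd₂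
end
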